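/- arXiv:1705.10856 — 3 statements merged into one kernel-verified Lean document; each statement's English description precedes it below -/
import Mathlib

section
/- Let n ≥ 1, Q = 2n+2, and let M be a constant 2n×2n real symmetric positive definite matrix which is symplectic, i.e. M⁻¹ = Jᵗ M J. Then for every point (x,t) ∈ ℝ^{2n+1} one has the two identities ((Q+2)/4)·⟨M ∇_H φ_M(x,t), ∇_H φ_M(x,t)⟩ = φ_M(x,t) · (𝓛_M φ_M)(x,t) = 4(Q+2)·⟨M⁻¹x, x⟩·φ_M(x,t), where φ_M(x,t) = ⟨M⁻¹x,x⟩² + t². -/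
open MeasureTheory Set Matrix

noncomputable section

/-- Points of the Heisenberg group `ℍⁿ = ℝ^{2n} × ℝ`, written `z = (x, t)`. -/
abbrev Hpt (n : ℕ) := (Fin (2 * n) → ℝ) × ℝ

/-- The standard symplectic matrix `J = (0, -Iₙ; Iₙ, 0)`. -/
def Jmat (n : ℕ) : Matrix (Fin (2 * n)) (Fin (2 * n)) ℝ :=
  Matrix.of fun i j =>
    if (i : ℕ) + n = (j : ℕ) then (-1 : ℝ) else if (j : ℕ) + n = (i : ℕ) then 1 else 0

/-- The Heisenberg group law `(x,t) ∘ (ξ,τ) = (x + ξ, t + τ + 2⟨Jx, ξ⟩)`. -/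
def hmul {n : ℕ} (z w : Hpt n) : Hpt n :=
  (z.1 + w.1, z.2 + w.2 + 2 * ((Jmat n).mulVec z.1 ⬝ᵥ w.1))

/-- The direction vector of the horizontal vector field `Xᵢ = ∂_{xᵢ} + 2(Jx)ᵢ ∂_t`
at a point with horizontal coordinates `x`. -/
def Xvec {n : ℕ} (x : Fin (2 * n) → ℝ) (i : Fin (2 * n)) : Hpt n :=
  (Pi.single i 1, 2 * (Jmat n).mulVec x i)

/-- The horizontal derivative `Xᵢ ψ`. -/
def Xd {n : ℕ} (i : Fin (2 * n)) (ψ : Hpt n → ℝ) (z : Hpt n) : ℝ :=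
  fderiv ℝ ψ z (Xvec z.1 i)

/-- The horizontal gradient `∇_H ψ = (X₁ψ, …, X_{2n}ψ)`. -/
def gradH {n : ℕ} (ψ : Hpt n → ℝ) (z : Hpt n) : Fin (2 * n) → ℝ := fun i => Xd i ψ z

/-- The operator `𝓛_A ψ = Σ_{i,j} a_{ij}(z) XᵢXⱼψ` for a (variable) coefficient matrix `A`. -/
def Lop {n : ℕ} (A : Hpt n → Matrix (Fin (2 * n)) (Fin (2 * n)) ℝ) (ψ : Hpt n → ℝ)
    (z : Hpt n) : ℝ :=
  ∑ i, ∑ j, A z i j * Xd i (Xd j ψ) z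

/-- `φ_M(x,t) = ⟨M⁻¹x, x⟩² + t²`. -/
def phiM {n : ℕ} (M : Matrix (Fin (2 * n)) (Fin (2 * n)) ℝ) (z : Hpt n) : ℝ :=
  (M⁻¹.mulVec z.1 ⬝ᵥ z.1) ^ 2 + z.2 ^ 2

/-- A matrix `M` is symplectic if `M⁻¹ = Jᵗ M J`. -/
def IsSymplecticMat {n : ℕ} (M : Matrix (Fin (2 * n)) (Fin (2 * n)) ℝ) : Prop :=
  M⁻¹ = (Jmat n)ᵀ * M * Jmat n

/-!
Each `Xᵢ` is a derivation, with `Xᵢ⟨Ax, x⟩ = 2(Ax)ᵢ` for symmetric `A` and `Xᵢ t = 2(Jx)ᵢ`, so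
with `q = ⟨M⁻¹x, x⟩` one gets `∇_H φ_M = 4(q M⁻¹x + t Jx)`. Symplecticity makes `M⁻¹x` and `Jx`
orthogonal for `⟨M·, ·⟩` with the same `M`-length `q`, whence `⟨M∇_Hφ_M, ∇_Hφ_M⟩ = 16 q φ_M`.
In `𝓛_M φ_M` the traces `tr(M M⁻¹) = 2n` and `tr(M J) = 0` (`J` skew, `M` symmetric) leave
`𝓛_M φ_M = (8n + 16) q`, and `8n + 16 = 4(Q + 2)`.
-/

section MatrixIdentities

variable {ι R : Type*} [Fintype ι] [CommRing R]

lemma dotProduct_mulVec_self_eq_zero [IsAddTorsionFree R] {A : Matrix ι ι R} (hA : Aᵀ = -A)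
    (v : ι → R) : v ⬝ᵥ A *ᵥ v = 0 := by
  refine self_eq_neg.mp ?_
  calc v ⬝ᵥ A *ᵥ v = Aᵀ *ᵥ v ⬝ᵥ v := by rw [dotProduct_mulVec, mulVec_transpose]
    _ = -(v ⬝ᵥ A *ᵥ v) := by rw [hA, neg_mulVec, neg_dotProduct, dotProduct_comm]

lemma trace_mul_eq_zero_of_isSymm [IsAddTorsionFree R] {A B : Matrix ι ι R} (hA : A.IsSymm)
    (hB : Bᵀ = -B) : (A * B).trace = 0 := by
  refine self_eq_neg.mp ?_
  calc (A * B).trace = (A * B)ᵀ.trace := (trace_transpose _).symm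
    _ = -(A * B).trace := by
      rw [transpose_mul, hB, hA.eq, neg_mul, trace_neg, trace_mul_comm]

lemma mulVec_nonsing_inv_mulVec [DecidableEq ι] {A : Matrix ι ι R} (hA : IsUnit A.det)
    (v : ι → R) : A *ᵥ (A⁻¹ *ᵥ v) = v := by
  rw [mulVec_mulVec, mul_nonsing_inv A hA, one_mulVec]

lemma mulVec_nonsing_inv_mulVec_dotProduct [DecidableEq ι] {A : Matrix ι ι R}
    (hA : IsUnit A.det) (v : ι → R) : A *ᵥ (A⁻¹ *ᵥ v) ⬝ᵥ A⁻¹ *ᵥ v = A⁻¹ *ᵥ v ⬝ᵥ v := by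
  rw [mulVec_nonsing_inv_mulVec hA, dotProduct_comm]

lemma sum_sum_mul_mul_eq_mulVec_dotProduct (A : Matrix ι ι R) (u v : ι → R) :
    ∑ i, ∑ j, A i j * (u i * v j) = A *ᵥ v ⬝ᵥ u := by
  simp only [mulVec, dotProduct, Finset.sum_mul]
  exact Finset.sum_congr rfl fun i _ => Finset.sum_congr rfl fun j _ => by ring

lemma sum_sum_mul_eq_trace_mul (A B : Matrix ι ι R) :
    ∑ i, ∑ j, A i j * B j i = (A * B).trace := by
  simp [trace, mul_apply]

end MatrixIdentities

lemma Jmat_transpose (n : ℕ) : (Jmat n)ᵀ = -Jmat n := by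
  ext i j
  simp only [transpose_apply, Jmat, of_apply]
  by_cases h : (i : ℕ) + n = j
  · simp only [h, ↓reduceIte, Matrix.neg_apply, of_apply, neg_neg, ite_eq_right_iff]
    omega
  · by_cases h' : (j : ℕ) + n = i <;> simp [h, h']

section Smoothness

variable {ι : Type*} [Fintype ι]

@[fun_prop]
lemma differentiable_mulVec (A : Matrix ι ι ℝ) : Differentiable ℝ (A *ᵥ ·) :=
  (LinearMap.toContinuousLinearMap A.mulVecLin).differentiable

@[fun_prop]
lemma differentiable_dotProduct :
    Differentiable ℝ (fun p : (ι → ℝ) × (ι → ℝ) => p.1 ⬝ᵥ p.2) := by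
  simp only [dotProduct]
  fun_prop

end Smoothness

section HorizontalCalculus

variable {n : ℕ} {i : Fin (2 * n)} {z : Hpt n} {f g : Hpt n → ℝ}

lemma Xd_add (hf : DifferentiableAt ℝ f z) (hg : DifferentiableAt ℝ g z) :
    Xd i (fun w => f w + g w) z = Xd i f z + Xd i g z := by
  simp [Xd, fderiv_fun_add hf hg]

lemma Xd_mul (hf : DifferentiableAt ℝ f z) (hg : DifferentiableAt ℝ g z) :
    Xd i (fun w => f w * g w) z = Xd i f z * g z + f z * Xd i g z := by
  simp only [Xd, fderiv_fun_mul hf hg, _root_.add_apply, _root_.smul_apply, smul_eq_mul]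
  ring

lemma Xd_const_mul (c : ℝ) (hf : DifferentiableAt ℝ f z) :
    Xd i (fun w => c * f w) z = c * Xd i f z := by
  simp [Xd, fderiv_const_mul hf]

lemma Xd_sum {ι : Type*} (s : Finset ι) {F : ι → Hpt n → ℝ}
    (hF : ∀ k ∈ s, DifferentiableAt ℝ (F k) z) :
    Xd i (fun w => ∑ k ∈ s, F k w) z = ∑ k ∈ s, Xd i (F k) z := by
  simp [Xd, fderiv_fun_sum hF]

lemma Xd_snd : Xd i Prod.snd z = 2 * (Jmat n *ᵥ z.1) i := by
  simp [Xd, fderiv_snd, Xvec]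

lemma Xd_mulVec_apply (A : Matrix (Fin (2 * n)) (Fin (2 * n)) ℝ) (j : Fin (2 * n)) :
    Xd i (fun w => (A *ᵥ w.1) j) z = A j i := by
  let ℓ : Hpt n →L[ℝ] ℝ := LinearMap.toContinuousLinearMap
    (LinearMap.proj j ∘ₗ A.mulVecLin ∘ₗ LinearMap.fst ℝ _ ℝ)
  change fderiv ℝ ℓ z (Xvec z.1 i) = A j i
  rw [ℓ.fderiv]
  simp [ℓ, Xvec]

lemma Xd_mulVec_fst_dotProduct {A : Matrix (Fin (2 * n)) (Fin (2 * n)) ℝ} (hA : A.IsSymm) :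
    Xd i (fun w => A *ᵥ w.1 ⬝ᵥ w.1) z = 2 * (A *ᵥ z.1) i := by
  have hcoord : ∀ j, Xd i (fun w : Hpt n => w.1 j) z = if j = i then 1 else 0 := fun j => by
    simpa [one_apply] using Xd_mulVec_apply (i := i) (z := z) 1 j
  have hterm : ∀ j, Xd i (fun w : Hpt n => (A *ᵥ w.1) j * w.1 j) z
      = A j i * z.1 j + (A *ᵥ z.1) j * if j = i then 1 else 0 := fun j => by
    rw [Xd_mul (by fun_prop) (by fun_prop), Xd_mulVec_apply, hcoord]
  simp only [dotProduct]
  rw [Xd_sum _ fun j _ => by fun_prop]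
  simp only [hterm, Finset.sum_add_distrib, mul_ite, mul_one, mul_zero, Finset.sum_ite_eq',
    Finset.mem_univ, if_true]
  have hcol : ∑ j, A j i * z.1 j = (A *ᵥ z.1) i :=
    Finset.sum_congr rfl fun j _ => by rw [hA.apply]
  rw [hcol]
  ring

end HorizontalCalculus

section PhiM

variable {n : ℕ} {M : Matrix (Fin (2 * n)) (Fin (2 * n)) ℝ}

lemma Xd_phiM (hM : M⁻¹.IsSymm) (j : Fin (2 * n)) (z : Hpt n) :
    Xd j (phiM M) z =
      4 * ((M⁻¹ *ᵥ z.1 ⬝ᵥ z.1) * (M⁻¹ *ᵥ z.1) j + z.2 * (Jmat n *ᵥ z.1) j) := by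
  have hphi : phiM M = fun w : Hpt n =>
      (M⁻¹ *ᵥ w.1 ⬝ᵥ w.1) * (M⁻¹ *ᵥ w.1 ⬝ᵥ w.1) + w.2 * w.2 := by
    funext w
    simp only [phiM]
    ring
  rw [hphi, Xd_add (by fun_prop) (by fun_prop), Xd_mul (by fun_prop) (by fun_prop),
    Xd_mul (by fun_prop) (by fun_prop), Xd_mulVec_fst_dotProduct hM, Xd_snd]
  ring

lemma gradH_phiM (hM : M⁻¹.IsSymm) (z : Hpt n) :
    gradH (phiM M) z =
      (4 : ℝ) • ((M⁻¹ *ᵥ z.1 ⬝ᵥ z.1) • M⁻¹ *ᵥ z.1 + z.2 • Jmat n *ᵥ z.1) := by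
  funext j
  simp [gradH, Xd_phiM hM]

lemma Xd_Xd_phiM (hM : M⁻¹.IsSymm) (i j : Fin (2 * n)) (z : Hpt n) :
    Xd i (Xd j (phiM M)) z =
      4 * (2 * (M⁻¹ *ᵥ z.1) i * (M⁻¹ *ᵥ z.1) j + (M⁻¹ *ᵥ z.1 ⬝ᵥ z.1) * M⁻¹ j i
        + 2 * (Jmat n *ᵥ z.1) i * (Jmat n *ᵥ z.1) j + z.2 * Jmat n j i) := by
  rw [funext (Xd_phiM hM j), Xd_const_mul _ (by fun_prop), Xd_add (by fun_prop) (by fun_prop),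
    Xd_mul (by fun_prop) (by fun_prop), Xd_mul (by fun_prop) (by fun_prop),
    Xd_mulVec_fst_dotProduct hM, Xd_mulVec_apply, Xd_mulVec_apply, Xd_snd]
  ring

end PhiM

section Symplectic

variable {n : ℕ} {M : Matrix (Fin (2 * n)) (Fin (2 * n)) ℝ}

lemma IsSymplecticMat.mulVec_Jmat_mulVec_dotProduct (hM : IsSymplecticMat M)
    (x : Fin (2 * n) → ℝ) : M *ᵥ (Jmat n *ᵥ x) ⬝ᵥ Jmat n *ᵥ x = M⁻¹ *ᵥ x ⬝ᵥ x := by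
  rw [hM, ← mulVec_mulVec, ← mulVec_mulVec, mulVec_transpose, ← dotProduct_mulVec]

lemma mulVec_gradH_phiM_dotProduct (hsymm : M.IsSymm) (hdet : IsUnit M.det)
    (hsympl : IsSymplecticMat M) (z : Hpt n) :
    M *ᵥ gradH (phiM M) z ⬝ᵥ gradH (phiM M) z = 16 * (M⁻¹ *ᵥ z.1 ⬝ᵥ z.1) * phiM M z := by
  have hab : M *ᵥ (M⁻¹ *ᵥ z.1) ⬝ᵥ Jmat n *ᵥ z.1 = 0 := by
    rw [mulVec_nonsing_inv_mulVec hdet, dotProduct_mulVec_self_eq_zero (Jmat_transpose n)]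
  have hba : M *ᵥ (Jmat n *ᵥ z.1) ⬝ᵥ M⁻¹ *ᵥ z.1 = 0 := by
    rw [dotProduct_comm, dotProduct_mulVec, ← mulVec_transpose, hsymm.eq, hab]
  rw [gradH_phiM hsymm.inv]
  simp only [mulVec_smul, mulVec_add, smul_dotProduct, dotProduct_smul, add_dotProduct,
    dotProduct_add, smul_eq_mul, mulVec_nonsing_inv_mulVec_dotProduct hdet, hab, hba,
    hsympl.mulVec_Jmat_mulVec_dotProduct, phiM]
  ring

lemma Lop_phiM (hsymm : M.IsSymm) (hdet : IsUnit M.det) (hsympl : IsSymplecticMat M)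
    (z : Hpt n) : Lop (fun _ => M) (phiM M) z = (8 * n + 16) * (M⁻¹ *ᵥ z.1 ⬝ᵥ z.1) := by
  have hexpand : ∀ i j, M i j * Xd i (Xd j (phiM M)) z =
      8 * (M i j * ((M⁻¹ *ᵥ z.1) i * (M⁻¹ *ᵥ z.1) j))
        + 4 * (M⁻¹ *ᵥ z.1 ⬝ᵥ z.1) * (M i j * M⁻¹ j i)
        + 8 * (M i j * ((Jmat n *ᵥ z.1) i * (Jmat n *ᵥ z.1) j))
        + 4 * z.2 * (M i j * Jmat n j i) := fun i j => by
    rw [Xd_Xd_phiM hsymm.inv]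
    ring
  have htrace : (M * M⁻¹).trace = 2 * n := by
    rw [mul_nonsing_inv M hdet, trace_one]
    simp
  simp only [Lop, hexpand, Finset.sum_add_distrib, ← Finset.mul_sum,
    sum_sum_mul_mul_eq_mulVec_dotProduct, sum_sum_mul_eq_trace_mul, htrace,
    trace_mul_eq_zero_of_isSymm hsymm (Jmat_transpose n), mulVec_nonsing_inv_mulVec_dotProduct hdet,
    hsympl.mulVec_Jmat_mulVec_dotProduct]
  ring

end Symplectic

theorem stmt0_general (n : ℕ) (Q : ℝ) (hQ : Q = 2 * n + 2)
    (M : Matrix (Fin (2 * n)) (Fin (2 * n)) ℝ)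
    (hsymm : M.IsSymm) (hpos : M.PosDef) (hsympl : IsSymplecticMat M) :
    ∀ z : Hpt n,
      (Q + 2) / 4 * (M.mulVec (gradH (phiM M) z) ⬝ᵥ gradH (phiM M) z) =
          phiM M z * Lop (fun _ => M) (phiM M) z ∧
      phiM M z * Lop (fun _ => M) (phiM M) z =
          4 * (Q + 2) * (M⁻¹.mulVec z.1 ⬝ᵥ z.1) * phiM M z := by
  intro z
  have hdet : IsUnit M.det := hpos.det_pos.ne'.isUnit
  rw [Lop_phiM hsymm hdet hsympl, mulVec_gradH_phiM_dotProduct hsymm hdet hsympl, hQ]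
  constructor <;> ring

/-- Lemma 3.2, first part. For a constant symmetric positive definite
symplectic matrix `M`, with `Q = 2n+2`, one has
`((Q+2)/4)·⟨M ∇_H φ_M, ∇_H φ_M⟩ = φ_M · 𝓛_M φ_M = 4(Q+2)·⟨M⁻¹x,x⟩·φ_M` everywhere. -/
theorem stmt0 (n : ℕ) (hn : 1 ≤ n) (Q : ℝ) (hQ : Q = 2 * n + 2)
    (M : Matrix (Fin (2 * n)) (Fin (2 * n)) ℝ)
    (hsymm : M.IsSymm) (hpos : M.PosDef) (hsympl : IsSymplecticMat M) :
    ∀ z : Hpt n,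
      (Q + 2) / 4 * (M.mulVec (gradH (phiM M) z) ⬝ᵥ gradH (phiM M) z) =
          phiM M z * Lop (fun _ => M) (phiM M) z ∧
      phiM M z * Lop (fun _ => M) (phiM M) z =
          4 * (Q + 2) * (M⁻¹.mulVec z.1 ⬝ᵥ z.1) * phiM M z :=
  stmt0_general n Q hQ M hsymm hpos hsympl

end
end

section
/- Fix 0 < δ < 1/2, 0 < λ ≤ 1 ≤ Λ, Q = 2n+2, and a non-decreasing function ω : [0,1) → [0,1) with ω(0) = 0 and ω(s) → 0 as s → 0⁺. There exists ε₀ > 0, depending only on λ, Λ, Q, δ and ω, with the following property: for every open set Ω ⊆ ℝ^{2n+1}, every A ∈ M_n(λ,Λ,Ω) ∩ C(Ω,ω) which is symplectic, and every z₀ ∈ Ω, setting M := A(z₀), α := (Q−2)/4 + δ, and g(ζ) := −(1/α)·φ_M(ζ)^{−α} for ζ ≠ 0, one has −tr(A(z)·(D²_H g)(ζ)) ≥ 0 for all z ∈ B_{ε₀}(z₀) ∩ Ω and all ζ ≠ 0. -/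
open MeasureTheory Set Matrix

noncomputable section

/-- Inverse in the Heisenberg group: `(x,t)⁻¹ = (-x,-t)`. -/
def hinv {n : ℕ} (z : Hpt n) : Hpt n := (-z.1, -z.2)

/-- The homogeneous symmetric norm `ρ(x,t) = (|x|⁴ + t²)^{1/4}`. -/
def rho {n : ℕ} (z : Hpt n) : ℝ := ((∑ i, z.1 i ^ 2) ^ 2 + z.2 ^ 2) ^ ((4 : ℝ)⁻¹)

/-- The left-invariant (quasi-)distance `d(z,ζ) = ρ(ζ⁻¹ ∘ z)`. -/
def hdist {n : ℕ} (z w : Hpt n) : ℝ := rho (hmul (hinv w) z)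

/-- The Koranyi ball `B_R(z)`. -/
def kball {n : ℕ} (z : Hpt n) (R : ℝ) : Set (Hpt n) := {w | hdist z w < R}

/-- The modified homogeneous norm `ρ_M = φ_M^{1/4}`. -/
def rhoM {n : ℕ} (M : Matrix (Fin (2 * n)) (Fin (2 * n)) ℝ) (z : Hpt n) : ℝ :=
  phiM M z ^ ((4 : ℝ)⁻¹)

/-- The modified (quasi-)distance `d_M(z,ζ) = ρ_M(ζ⁻¹ ∘ z)`. -/
def dM {n : ℕ} (M : Matrix (Fin (2 * n)) (Fin (2 * n)) ℝ) (z w : Hpt n) : ℝ :=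
  rhoM M (hmul (hinv w) z)

/-- The ball `B^M_r(z)` for the modified distance `d_M`. -/
def kballM {n : ℕ} (M : Matrix (Fin (2 * n)) (Fin (2 * n)) ℝ) (z : Hpt n) (r : ℝ) :
    Set (Hpt n) := {w | dM M z w < r}

/-- Loewner order on symmetric matrices: `P ≤ Q` iff `Q - P` is positive semidefinite. -/
def matLE {m : ℕ} (P Q : Matrix (Fin m) (Fin m) ℝ) : Prop := (Q - P).PosSemidef

/-- The symmetrized horizontal Hessian `D²_H ψ = (X_{i,j} ψ)_{ij}`,
`X_{i,j}ψ = ½(XᵢXⱼψ + XⱼXᵢψ)`. -/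
def D2H {n : ℕ} (ψ : Hpt n → ℝ) (z : Hpt n) : Matrix (Fin (2 * n)) (Fin (2 * n)) ℝ :=
  Matrix.of fun i j => (Xd i (Xd j ψ) z + Xd j (Xd i ψ) z) / 2

/-- The operator norm of a matrix, i.e. the norm of the induced operator on
Euclidean space. -/
def matNorm {m : ℕ} (M : Matrix (Fin m) (Fin m) ℝ) : ℝ :=
  ‖Matrix.toEuclideanCLM (𝕜 := ℝ) M‖

/-- The class `M_n(λ,Λ,Ω)`: symmetric matrix-valued functions of unit determinant with
`λ I ≤ A(z) ≤ Λ I` on `Ω`. -/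
def MClass {n : ℕ} (lam Lam : ℝ) (Ω : Set (Hpt n))
    (A : Hpt n → Matrix (Fin (2 * n)) (Fin (2 * n)) ℝ) : Prop :=
  ∀ z ∈ Ω, (A z).IsSymm ∧ (A z).det = 1 ∧
    matLE (lam • (1 : Matrix (Fin (2 * n)) (Fin (2 * n)) ℝ)) (A z) ∧
    matLE (A z) (Lam • (1 : Matrix (Fin (2 * n)) (Fin (2 * n)) ℝ))

/-- The class `C(Ω,ω)`: continuous matrix-valued functions whose modulus of continuity
`ω_A(z₀;ε) = sup_{z ∈ B_ε(z₀) ∩ Ω} ‖A(z) - A(z₀)‖` is bounded by `ω(ε)` for all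
`z₀ ∈ Ω` and `0 < ε < 1`. -/
def CClass {n : ℕ} (ω : ℝ → ℝ) (Ω : Set (Hpt n))
    (A : Hpt n → Matrix (Fin (2 * n)) (Fin (2 * n)) ℝ) : Prop :=
  ContinuousOn A Ω ∧
    ∀ z₀ ∈ Ω, ∀ ε : ℝ, 0 < ε → ε < 1 → ∀ z ∈ kball z₀ ε ∩ Ω, matNorm (A z - A z₀) ≤ ω ε

/-- `A` is symplectic on `Ω`: `A(z)⁻¹ = Jᵗ A(z) J` for all `z ∈ Ω`. -/
def SymplecticOn {n : ℕ} (Ω : Set (Hpt n))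
    (A : Hpt n → Matrix (Fin (2 * n)) (Fin (2 * n)) ℝ) : Prop :=
  ∀ z ∈ Ω, IsSymplecticMat (A z)

/-- A modulus `ω : [0,1) → [0,1)`, non-decreasing, with `ω(0) = 0` and `ω(0⁺) = 0`. -/
def IsModulus (ω : ℝ → ℝ) : Prop :=
  MonotoneOn ω (Set.Ico (0 : ℝ) 1) ∧ (∀ s ∈ Set.Ico (0 : ℝ) 1, 0 ≤ ω s ∧ ω s < 1) ∧
    ω 0 = 0 ∧ Filter.Tendsto ω (nhdsWithin 0 (Set.Ioi 0)) (nhds 0)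

/-- The barrier kernel `g(ζ) = -(1/α)·φ_M(ζ)^{-α}`. -/
def gfun {n : ℕ} (M : Matrix (Fin (2 * n)) (Fin (2 * n)) ℝ) (α : ℝ) (ζ : Hpt n) : ℝ :=
  -(1 / α) * phiM M ζ ^ (-α : ℝ)

/-- The conclusion of the subsolution lemma (Lemma 3.6): for all open `Ω`, all symplectic
`A ∈ M_n(λ,Λ,Ω) ∩ C(Ω,ω)` and `z₀ ∈ Ω`, with `M = A(z₀)`, `α = (Q-2)/4 + δ` and
`g = -(1/α)·φ_M^{-α}`, one has `-tr(A(z)·(D²_H g)(ζ)) ≥ 0` for all `z ∈ B_{ε₀}(z₀) ∩ Ω`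
and all `ζ ≠ 0`. -/
def SubsolProp (n : ℕ) (lam Lam δ : ℝ) (ω : ℝ → ℝ) (ε₀ : ℝ) : Prop :=
  ∀ (Ω : Set (Hpt n)), IsOpen Ω →
    ∀ A : Hpt n → Matrix (Fin (2 * n)) (Fin (2 * n)) ℝ,
      MClass lam Lam Ω A → CClass ω Ω A → SymplecticOn Ω A →
        ∀ z₀ ∈ Ω, ∀ z ∈ kball z₀ ε₀ ∩ Ω, ∀ ζ : Hpt n, ζ ≠ 0 →
          0 ≤ -(A z * D2H (gfun (A z₀) ((2 * (n : ℝ) + 2 - 2) / 4 + δ)) ζ).trace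

/-!
Write `x = ζ.1`, `t = ζ.2`, `M = A(z₀)`, `u = M⁻¹x`, `v = Jx`, `q = ⟨u, x⟩` and
`φ = φ_M(ζ) = q² + t²`. The horizontal gradient of `φ` is `w = 4q u + 4t v`, and the chain rule
gives `-tr(A · D²_H g)(ζ) = φ^{-α-2} · B(A)` with
`B(A) = barrierForm M α ζ A = (α+1)⟨w, Aw⟩ - φ(8⟨u, Au⟩ + 4q tr(AM⁻¹) + 8⟨v, Av⟩)`,
which is linear in `A` (the antisymmetric `J`-terms of `XᵢXⱼg` cancel in the symmetrization).
For `A = M` the symplectic relation `JᵀMJ = M⁻¹` gives `⟨v, Mv⟩ = q = ⟨u, Mu⟩` and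
`⟨u, Mv⟩ = ⟨x, Jx⟩ = 0`, hence `⟨w, Mw⟩ = 16qφ` and `B(M) = (16α - 8n) qφ = 16δ qφ`.
The bound `M ≥ λ` controls `|u|², |v|² ≤ q/λ`, `|w|² ≤ 32qφ/λ` and `‖M⁻¹‖ ≤ 1/λ`, so
`|B(A - M)| ≤ C ‖A - M‖ qφ / λ` with `C = 32(α+1) + 8n + 16`, and `B(A(z)) ≥ 0` as soon as
`ω(ε₀) C ≤ 16δλ`.
-/

open Topology
open scoped RealInnerProductSpace

section Calculus

variable {E : Type*} [NormedAddCommGroup E] [NormedSpace ℝ E] {m : ℕ} {f g : E → Fin m → ℝ}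

@[fun_prop]
theorem Differentiable.dotProduct (hf : Differentiable ℝ f) (hg : Differentiable ℝ g) :
    Differentiable ℝ (fun x => f x ⬝ᵥ g x) := by
  unfold _root_.dotProduct
  fun_prop

@[fun_prop]
theorem Differentiable.mulVec (P : Matrix (Fin m) (Fin m) ℝ) (hf : Differentiable ℝ f) :
    Differentiable ℝ (fun x => P *ᵥ f x) := by
  unfold Matrix.mulVec _root_.dotProduct
  fun_prop

theorem hasDerivAt_neg_inv_mul_rpow_neg {α s : ℝ} (hα : α ≠ 0) (hs : s ≠ 0) :
    HasDerivAt (fun s => -(1 / α) * s ^ (-α)) (s ^ (-α - 1)) s := by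
  refine ((Real.hasDerivAt_rpow_const (Or.inl hs)).const_mul (-(1 / α))).congr_deriv ?_
  field_simp

end Calculus

section MatrixBounds

variable {m : ℕ}

theorem dotProduct_self_eq_norm_sq (y : Fin m → ℝ) :
    y ⬝ᵥ y = ‖WithLp.toLp 2 y‖ ^ 2 := by
  rw [← real_inner_self_eq_norm_sq, EuclideanSpace.inner_toLp_toLp, star_trivial]

theorem dotProduct_add_self_le (a b : Fin m → ℝ) :
    (a + b) ⬝ᵥ (a + b) ≤ 2 * (a ⬝ᵥ a) + 2 * (b ⬝ᵥ b) := by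
  have := dotProduct_self_star_nonneg (a - b)
  simp only [star_trivial, sub_dotProduct, dotProduct_sub, add_dotProduct, dotProduct_add,
    dotProduct_comm b a] at this ⊢
  linarith

theorem mulVec_mulVec_inv {M : Matrix (Fin m) (Fin m) ℝ} (hdet : IsUnit M.det)
    (x : Fin m → ℝ) : M *ᵥ (M⁻¹ *ᵥ x) = x := by
  rw [mulVec_mulVec, mul_nonsing_inv _ hdet, one_mulVec]

theorem abs_dotProduct_mulVec_le (E : Matrix (Fin m) (Fin m) ℝ) (x y : Fin m → ℝ) :
    |x ⬝ᵥ E *ᵥ y| ≤ matNorm E * ‖WithLp.toLp 2 x‖ * ‖WithLp.toLp 2 y‖ := by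
  rw [← inner_toEuclideanCLM]
  calc _ ≤ ‖WithLp.toLp 2 x‖ * ‖toEuclideanCLM (𝕜 := ℝ) E (WithLp.toLp 2 y)‖ :=
        abs_real_inner_le_norm _ _
    _ ≤ ‖WithLp.toLp 2 x‖ * (matNorm E * ‖WithLp.toLp 2 y‖) := by
        gcongr; exact ContinuousLinearMap.le_opNorm _ _
    _ = _ := by ring

theorem abs_dotProduct_mulVec_self_le (E : Matrix (Fin m) (Fin m) ℝ) (y : Fin m → ℝ) :
    |y ⬝ᵥ E *ᵥ y| ≤ matNorm E * (y ⬝ᵥ y) := by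
  rw [dotProduct_self_eq_norm_sq, sq, ← mul_assoc]
  exact abs_dotProduct_mulVec_le E y y

theorem abs_trace_le_mul_matNorm (B : Matrix (Fin m) (Fin m) ℝ) :
    |B.trace| ≤ m * matNorm B := by
  have hdiag : ∀ i, B i i = Pi.single i 1 ⬝ᵥ B *ᵥ Pi.single i 1 := fun i => by simp
  calc |B.trace| ≤ ∑ i, |B i i| := Finset.abs_sum_le_sum_abs _ _
    _ ≤ ∑ _i : Fin m, matNorm B := Finset.sum_le_sum fun i _ => by
        simpa [← hdiag] using abs_dotProduct_mulVec_self_le B (Pi.single i 1)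
    _ = m * matNorm B := by simp

theorem mul_abs_dotProduct_mulVec_self_le {c b : ℝ} (hc : 0 ≤ c) (E : Matrix (Fin m) (Fin m) ℝ)
    {y : Fin m → ℝ} (hy : c * (y ⬝ᵥ y) ≤ b) : c * |y ⬝ᵥ E *ᵥ y| ≤ matNorm E * b :=
  calc c * |y ⬝ᵥ E *ᵥ y| ≤ c * (matNorm E * (y ⬝ᵥ y)) := by
        gcongr; exact abs_dotProduct_mulVec_self_le E y
    _ = matNorm E * (c * (y ⬝ᵥ y)) := by ring
    _ ≤ matNorm E * b := by gcongr; exact norm_nonneg _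

theorem matNorm_mul_le (A B : Matrix (Fin m) (Fin m) ℝ) :
    matNorm (A * B) ≤ matNorm A * matNorm B := by
  simp only [matNorm, map_mul]
  exact norm_mul_le _ _

variable {c : ℝ} {M : Matrix (Fin m) (Fin m) ℝ}

theorem le_dotProduct_mulVec_of_matLE (h : matLE (c • 1) M) (y : Fin m → ℝ) :
    c * (y ⬝ᵥ y) ≤ y ⬝ᵥ M *ᵥ y := by
  have := h.dotProduct_mulVec_nonneg y
  simp only [star_trivial, sub_mulVec, smul_mulVec, one_mulVec, dotProduct_sub,
    dotProduct_smul, smul_eq_mul] at this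
  linarith

theorem le_dotProduct_mulVec_inv (hc : matLE (c • 1) M) (hdet : IsUnit M.det) (x : Fin m → ℝ) :
    c * (M⁻¹ *ᵥ x ⬝ᵥ M⁻¹ *ᵥ x) ≤ M⁻¹ *ᵥ x ⬝ᵥ x := by
  simpa [mulVec_mulVec_inv hdet] using le_dotProduct_mulVec_of_matLE hc (M⁻¹ *ᵥ x)

theorem matNorm_inv_le (hc₀ : 0 < c) (hc : matLE (c • 1) M) (hdet : IsUnit M.det) :
    matNorm M⁻¹ ≤ c⁻¹ := by
  refine ContinuousLinearMap.opNorm_le_bound _ (inv_nonneg.2 hc₀.le) fun x => ?_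
  set y := toEuclideanCLM (𝕜 := ℝ) M⁻¹ x
  have hMy : toEuclideanCLM (𝕜 := ℝ) M y = x := by
    rw [show toEuclideanCLM (𝕜 := ℝ) M y =
        (toEuclideanCLM (𝕜 := ℝ) M * toEuclideanCLM (𝕜 := ℝ) M⁻¹) x from rfl,
      ← map_mul, mul_nonsing_inv _ hdet, map_one]
    rfl
  have key : c * ‖y‖ ^ 2 ≤ ‖y‖ * ‖x‖ :=
    calc c * ‖y‖ ^ 2 ≤ ⟪y, toEuclideanCLM (𝕜 := ℝ) M y⟫ := by
          simpa [inner_toEuclideanCLM, dotProduct_self_eq_norm_sq] using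
            le_dotProduct_mulVec_of_matLE hc (WithLp.ofLp y)
      _ ≤ ‖y‖ * ‖x‖ := by rw [hMy]; exact real_inner_le_norm _ _
  rcases (norm_nonneg y).eq_or_lt with h0 | hpos
  · rw [← h0]; positivity
  · rw [le_inv_mul_iff₀ hc₀]
    nlinarith

theorem mul_abs_trace_mul_inv_le (hc₀ : 0 < c) (hc : matLE (c • 1) M) (hdet : IsUnit M.det)
    (E : Matrix (Fin m) (Fin m) ℝ) : c * |(E * M⁻¹).trace| ≤ m * matNorm E := by
  have hinv : c * matNorm M⁻¹ ≤ 1 := by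
    have := mul_le_mul_of_nonneg_left (matNorm_inv_le hc₀ hc hdet) hc₀.le
    rwa [mul_inv_cancel₀ hc₀.ne'] at this
  calc c * |(E * M⁻¹).trace| ≤ c * (m * (matNorm E * matNorm M⁻¹)) := by
        gcongr
        exact (abs_trace_le_mul_matNorm _).trans (by gcongr; exact matNorm_mul_le E M⁻¹)
    _ = m * matNorm E * (c * matNorm M⁻¹) := by ring
    _ ≤ m * matNorm E := mul_le_of_le_one_right (by unfold matNorm; positivity) hinv

end MatrixBounds

theorem Jmat_apply_swap (n : ℕ) (i j : Fin (2 * n)) : Jmat n j i = -Jmat n i j := by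
  have := i.isLt
  simp only [Jmat, of_apply]
  split_ifs <;> (try omega) <;> norm_num

theorem dotProduct_mulVec_Jmat_self (n : ℕ) (x : Fin (2 * n) → ℝ) : x ⬝ᵥ Jmat n *ᵥ x = 0 := by
  have hJ : (Jmat n)ᵀ = -Jmat n := by
    ext i j; simp [Jmat_apply_swap n j i]
  have h := dotProduct_mulVec x (Jmat n) x
  rw [← mulVec_transpose, hJ, neg_mulVec, neg_dotProduct, dotProduct_comm] at h
  rw [dotProduct_comm]
  linarith

theorem IsSymplecticMat.Jmat_mulVec_dotProduct_mulVec {n : ℕ}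
    {M : Matrix (Fin (2 * n)) (Fin (2 * n)) ℝ} (hS : IsSymplecticMat M) (x : Fin (2 * n) → ℝ) :
    Jmat n *ᵥ x ⬝ᵥ M *ᵥ (Jmat n *ᵥ x) = M⁻¹ *ᵥ x ⬝ᵥ x := by
  rw [dotProduct_comm (M⁻¹ *ᵥ x), hS, ← mulVec_mulVec, ← mulVec_mulVec, dotProduct_mulVec x,
    vecMul_transpose]

theorem IsModulus.exists_lt {ω : ℝ → ℝ} (hω : IsModulus ω) {η : ℝ} (hη : 0 < η) :
    ∃ ε, 0 < ε ∧ ε < 1 ∧ ω ε < η := by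
  obtain ⟨ε, hωε, hε⟩ :=
    ((hω.2.2.2.eventually (gt_mem_nhds hη)).and (Ioo_mem_nhdsGT one_pos)).exists
  exact ⟨ε, hε.1, hε.2, hωε⟩

namespace Heisenberg

variable {n : ℕ} {ψ χ : Hpt n → ℝ} {z : Hpt n} {i : Fin (2 * n)}

theorem Xd_congr (h : ψ =ᶠ[𝓝 z] χ) : Xd i ψ z = Xd i χ z := by
  rw [Xd, Xd, h.fderiv_eq]

theorem Xd_clm (L : Hpt n →L[ℝ] ℝ) : Xd i L z = L (Xvec z.1 i) := by
  rw [Xd, L.fderiv]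

theorem Xd_add (hψ : DifferentiableAt ℝ ψ z) (hχ : DifferentiableAt ℝ χ z) :
    Xd i (fun z => ψ z + χ z) z = Xd i ψ z + Xd i χ z := by
  rw [Xd, fderiv_fun_add hψ hχ]; rfl

theorem Xd_const_mul (c : ℝ) (hψ : DifferentiableAt ℝ ψ z) :
    Xd i (fun z => c * ψ z) z = c * Xd i ψ z := by
  rw [Xd, fderiv_const_mul hψ]; rfl

theorem Xd_mul (hψ : DifferentiableAt ℝ ψ z) (hχ : DifferentiableAt ℝ χ z) :
    Xd i (fun z => ψ z * χ z) z = Xd i ψ z * χ z + ψ z * Xd i χ z := by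
  rw [Xd, fderiv_fun_mul hψ hχ]
  simp only [_root_.add_apply, _root_.smul_apply, smul_eq_mul, Xd]
  ring

theorem Xd_sum {ι : Type*} (s : Finset ι) {ψ : ι → Hpt n → ℝ}
    (h : ∀ k ∈ s, DifferentiableAt ℝ (ψ k) z) :
    Xd i (fun z => ∑ k ∈ s, ψ k z) z = ∑ k ∈ s, Xd i (ψ k) z := by
  rw [Xd, fderiv_fun_sum h]; simp [Xd]

theorem Xd_comp {G : ℝ → ℝ} {G' : ℝ} (hG : HasDerivAt G G' (ψ z)) (hψ : DifferentiableAt ℝ ψ z) :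
    Xd i (fun z => G (ψ z)) z = G' * Xd i ψ z := by
  rw [Xd, show (fun z => G (ψ z)) = G ∘ ψ from rfl,
    (hG.comp_hasFDerivAt z hψ.hasFDerivAt).fderiv]
  rfl

theorem Xd_Xd_comp {G G' : ℝ → ℝ} {G'' : ℝ} {j : Fin (2 * n)}
    (hG : ∀ᶠ y in 𝓝 z, HasDerivAt G (G' (ψ y)) (ψ y)) (hG' : HasDerivAt G' G'' (ψ z))
    (hψ : Differentiable ℝ ψ) (hXψ : DifferentiableAt ℝ (Xd j ψ) z) :
    Xd i (Xd j (fun y => G (ψ y))) z =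
      G'' * Xd i ψ z * Xd j ψ z + G' (ψ z) * Xd i (Xd j ψ) z := by
  have h : Xd j (fun y => G (ψ y)) =ᶠ[𝓝 z] fun y => G' (ψ y) * Xd j ψ y :=
    hG.mono fun y hy => Xd_comp hy (hψ y)
  rw [Xd_congr h, Xd_mul (ψ := fun y => G' (ψ y)) (hG'.differentiableAt.comp z (hψ z)) hXψ,
    Xd_comp hG' (hψ z)]

theorem Xd_mulVec_fst (P : Matrix (Fin (2 * n)) (Fin (2 * n)) ℝ) (j : Fin (2 * n)) :
    Xd i (fun z : Hpt n => (P *ᵥ z.1) j) z = P j i := by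
  let L : Hpt n →L[ℝ] ℝ :=
    LinearMap.toContinuousLinearMap (LinearMap.proj j ∘ₗ Matrix.toLin' P ∘ₗ LinearMap.fst ℝ _ ℝ)
  rw [show (fun z : Hpt n => (P *ᵥ z.1) j) = L from rfl, Xd_clm]
  simp [L, Xvec]

theorem Xd_snd : Xd i (fun z : Hpt n => z.2) z = 2 * (Jmat n *ᵥ z.1) i := by
  rw [show (fun z : Hpt n => z.2) = ContinuousLinearMap.snd ℝ _ ℝ from rfl, Xd_clm]
  rfl

theorem Xd_quadForm {P : Matrix (Fin (2 * n)) (Fin (2 * n)) ℝ} (hP : P.IsSymm) :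
    Xd i (fun z : Hpt n => P *ᵥ z.1 ⬝ᵥ z.1) z = 2 * (P *ᵥ z.1) i := by
  have hsum : (fun z : Hpt n => P *ᵥ z.1 ⬝ᵥ z.1) =
      fun z => ∑ k, (P *ᵥ z.1) k * ((1 : Matrix _ _ ℝ) *ᵥ z.1) k := by
    simp [dotProduct]
  rw [hsum, Xd_sum _ fun k _ => by fun_prop]
  have hk : ∀ k, Xd i (fun z : Hpt n => (P *ᵥ z.1) k * ((1 : Matrix _ _ ℝ) *ᵥ z.1) k) z =
      P k i * z.1 k + (P *ᵥ z.1) k * (1 : Matrix _ _ ℝ) k i := fun k => by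
    rw [Xd_mul (by fun_prop) (by fun_prop), Xd_mulVec_fst, Xd_mulVec_fst, one_mulVec]
  simp only [hk, Finset.sum_add_distrib, one_apply, mul_ite, mul_one, mul_zero,
    Finset.sum_ite_eq', Finset.mem_univ, if_true]
  simp [mulVec, dotProduct, hP.apply i, two_mul]

section PhiM

variable {M : Matrix (Fin (2 * n)) (Fin (2 * n)) ℝ}

theorem Xd_phiM (hM : M.IsSymm) (i : Fin (2 * n)) (z : Hpt n) :
    Xd i (phiM M) z =
      4 * (M⁻¹ *ᵥ z.1 ⬝ᵥ z.1) * (M⁻¹ *ᵥ z.1) i + 4 * z.2 * (Jmat n *ᵥ z.1) i := by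
  change Xd i (fun z : Hpt n => (M⁻¹ *ᵥ z.1 ⬝ᵥ z.1) ^ 2 + z.2 ^ 2) z = _
  rw [Xd_add (by fun_prop) (by fun_prop), Xd_comp (hasDerivAt_pow 2 _) (by fun_prop),
    Xd_comp (hasDerivAt_pow 2 _) (by fun_prop), Xd_quadForm hM.inv, Xd_snd]
  ring

theorem Xd_Xd_phiM (hM : M.IsSymm) (i j : Fin (2 * n)) :
    Xd i (Xd j (phiM M)) z =
      8 * (M⁻¹ *ᵥ z.1) i * (M⁻¹ *ᵥ z.1) j + 4 * (M⁻¹ *ᵥ z.1 ⬝ᵥ z.1) * M⁻¹ j i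
        + 8 * (Jmat n *ᵥ z.1) i * (Jmat n *ᵥ z.1) j + 4 * z.2 * Jmat n j i := by
  rw [funext (Xd_phiM hM j), Xd_add (by fun_prop) (by fun_prop),
    Xd_mul (by fun_prop) (by fun_prop), Xd_const_mul _ (by fun_prop),
    Xd_mul (by fun_prop) (by fun_prop), Xd_const_mul _ (by fun_prop),
    Xd_quadForm hM.inv, Xd_snd, Xd_mulVec_fst, Xd_mulVec_fst]
  ring

end PhiM

section Barrier

variable {M : Matrix (Fin (2 * n)) (Fin (2 * n)) ℝ} {α : ℝ} {ζ : Hpt n}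

theorem differentiable_phiM : Differentiable ℝ (phiM M) := by
  unfold phiM; fun_prop

theorem gradH_phiM (hM : M.IsSymm) (z : Hpt n) :
    gradH (phiM M) z = (4 * (M⁻¹ *ᵥ z.1 ⬝ᵥ z.1)) • (M⁻¹ *ᵥ z.1) + (4 * z.2) • (Jmat n *ᵥ z.1) := by
  ext i; simp [gradH, Xd_phiM hM]

theorem Xd_Xd_gfun (hM : M.IsSymm) (hα : α ≠ 0) (hζ : phiM M ζ ≠ 0) (i j : Fin (2 * n)) :
    Xd i (Xd j (gfun M α)) ζ =
      (-α - 1) * phiM M ζ ^ (-α - 2) * Xd i (phiM M) ζ * Xd j (phiM M) ζ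
        + phiM M ζ ^ (-α - 1) * Xd i (Xd j (phiM M)) ζ := by
  have hne : ∀ᶠ y in 𝓝 ζ, phiM M y ≠ 0 :=
    differentiable_phiM.continuous.continuousAt.eventually_ne hζ
  have hXφ : DifferentiableAt ℝ (Xd j (phiM M)) ζ := by
    rw [funext (Xd_phiM hM j)]; fun_prop
  rw [show gfun M α = fun y => -(1 / α) * phiM M y ^ (-α) from rfl,
    Xd_Xd_comp (G := fun s => -(1 / α) * s ^ (-α)) (G' := fun s => s ^ (-α - 1))
      (hne.mono fun y hy => hasDerivAt_neg_inv_mul_rpow_neg hα hy)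
      (Real.hasDerivAt_rpow_const (Or.inl hζ)) differentiable_phiM hXφ, sub_sub]
  norm_num

theorem D2H_gfun (hM : M.IsSymm) (hα : α ≠ 0) (hζ : phiM M ζ ≠ 0) :
    D2H (gfun M α) ζ =
      phiM M ζ ^ (-α - 1) • ((8 : ℝ) • vecMulVec (M⁻¹ *ᵥ ζ.1) (M⁻¹ *ᵥ ζ.1)
          + (4 * (M⁻¹ *ᵥ ζ.1 ⬝ᵥ ζ.1)) • M⁻¹ + (8 : ℝ) • vecMulVec (Jmat n *ᵥ ζ.1) (Jmat n *ᵥ ζ.1))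
        + ((-α - 1) * phiM M ζ ^ (-α - 2)) • vecMulVec (gradH (phiM M) ζ) (gradH (phiM M) ζ) := by
  ext k l
  simp only [D2H, of_apply, Xd_Xd_gfun hM hα hζ, Xd_Xd_phiM hM, Matrix.add_apply,
    Matrix.smul_apply, vecMulVec_apply, gradH, smul_eq_mul, hM.inv.apply k l,
    Jmat_apply_swap n k l]
  ring

def barrierForm (M : Matrix (Fin (2 * n)) (Fin (2 * n)) ℝ) (α : ℝ) (ζ : Hpt n)
    (A : Matrix (Fin (2 * n)) (Fin (2 * n)) ℝ) : ℝ :=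
  (α + 1) * (gradH (phiM M) ζ ⬝ᵥ A *ᵥ gradH (phiM M) ζ)
    - phiM M ζ * (8 * (M⁻¹ *ᵥ ζ.1 ⬝ᵥ A *ᵥ (M⁻¹ *ᵥ ζ.1))
      + 4 * (M⁻¹ *ᵥ ζ.1 ⬝ᵥ ζ.1) * (A * M⁻¹).trace
      + 8 * (Jmat n *ᵥ ζ.1 ⬝ᵥ A *ᵥ (Jmat n *ᵥ ζ.1)))

theorem barrierForm_add (A B : Matrix (Fin (2 * n)) (Fin (2 * n)) ℝ) :
    barrierForm M α ζ (A + B) = barrierForm M α ζ A + barrierForm M α ζ B := by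
  simp only [barrierForm, add_mulVec, dotProduct_add, Matrix.add_mul, trace_add]
  ring

theorem neg_trace_mul_D2H_gfun (hM : M.IsSymm) (hα : α ≠ 0) (hζ : phiM M ζ ≠ 0)
    (A : Matrix (Fin (2 * n)) (Fin (2 * n)) ℝ) :
    -(A * D2H (gfun M α) ζ).trace = phiM M ζ ^ (-α - 2) * barrierForm M α ζ A := by
  have hpow : phiM M ζ ^ (-α - 1) = phiM M ζ ^ (-α - 2) * phiM M ζ := by
    rw [← Real.rpow_add_one hζ]; ring_nf
  simp only [D2H_gfun hM hα hζ, Matrix.mul_add, Matrix.mul_smul, trace_add, trace_smul,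
    mul_vecMulVec, trace_vecMulVec, smul_eq_mul, barrierForm, hpow, dotProduct_comm (A *ᵥ _)]
  ring

theorem barrierForm_self (hM : M.IsSymm) (hdet : IsUnit M.det) (hS : IsSymplecticMat M) :
    barrierForm M α ζ M = (16 * α - 8 * n) * (M⁻¹ *ᵥ ζ.1 ⬝ᵥ ζ.1) * phiM M ζ := by
  have hMu := mulVec_mulVec_inv hdet ζ.1
  have huMv : M⁻¹ *ᵥ ζ.1 ⬝ᵥ M *ᵥ (Jmat n *ᵥ ζ.1) = 0 := by
    rw [dotProduct_mulVec, ← mulVec_transpose, hM.eq, hMu, dotProduct_mulVec_Jmat_self]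
  have hvx : Jmat n *ᵥ ζ.1 ⬝ᵥ ζ.1 = 0 := by
    rw [dotProduct_comm, dotProduct_mulVec_Jmat_self]
  have htr : (M * M⁻¹).trace = 2 * n := by
    rw [mul_nonsing_inv _ hdet, trace_one, Fintype.card_fin, Nat.cast_mul, Nat.cast_ofNat]
  simp only [barrierForm, gradH_phiM hM, mulVec_add, mulVec_smul, dotProduct_add, add_dotProduct,
    dotProduct_smul, smul_dotProduct, smul_eq_mul, hMu, huMv, hvx, hS.Jmat_mulVec_dotProduct_mulVec,
    htr, dotProduct_comm (M⁻¹ *ᵥ ζ.1) ζ.1]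
  simp only [phiM, dotProduct_comm ζ.1]
  ring

theorem phiM_pos {c : ℝ} (hc₀ : 0 < c) (hc : matLE (c • 1) M)
    (hdet : IsUnit M.det) (hζ : ζ ≠ 0) : 0 < phiM M ζ := by
  by_cases hx : ζ.1 = 0
  · have ht : ζ.2 ≠ 0 := fun ht => hζ (Prod.ext hx ht)
    simp only [phiM]
    positivity
  · have hu : M⁻¹ *ᵥ ζ.1 ≠ 0 := fun hu => hx <| by
      rw [← mulVec_mulVec_inv hdet ζ.1, hu, mulVec_zero]
    have hq : 0 < M⁻¹ *ᵥ ζ.1 ⬝ᵥ ζ.1 :=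
      (mul_pos hc₀ (by simpa using dotProduct_star_self_pos_iff.2 hu)).trans_le
        (le_dotProduct_mulVec_inv hc hdet ζ.1)
    simp only [phiM]
    positivity

theorem mul_dotProduct_gradH_phiM_le {c : ℝ} (hc₀ : 0 ≤ c) (hc : matLE (c • 1) M)
    (hM : M.IsSymm) (hdet : IsUnit M.det) (hS : IsSymplecticMat M) :
    c * (gradH (phiM M) ζ ⬝ᵥ gradH (phiM M) ζ) ≤ 32 * ((M⁻¹ *ᵥ ζ.1 ⬝ᵥ ζ.1) * phiM M ζ) := by
  set u := M⁻¹ *ᵥ ζ.1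
  set v := Jmat n *ᵥ ζ.1
  set q := u ⬝ᵥ ζ.1
  have hu : c * (u ⬝ᵥ u) ≤ q := le_dotProduct_mulVec_inv hc hdet ζ.1
  have hv : c * (v ⬝ᵥ v) ≤ q :=
    (le_dotProduct_mulVec_of_matLE hc v).trans_eq (hS.Jmat_mulVec_dotProduct_mulVec ζ.1)
  have := dotProduct_add_self_le ((4 * q) • u) ((4 * ζ.2) • v)
  simp only [dotProduct_smul, smul_dotProduct, smul_eq_mul] at this
  rw [gradH_phiM hM, show phiM M ζ = q ^ 2 + ζ.2 ^ 2 from rfl]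
  nlinarith [mul_le_mul_of_nonneg_left hu (sq_nonneg q),
    mul_le_mul_of_nonneg_left hv (sq_nonneg ζ.2)]

theorem abs_barrierForm_le {c : ℝ} (hc₀ : 0 < c) (hc : matLE (c • 1) M)
    (hM : M.IsSymm) (hdet : IsUnit M.det) (hS : IsSymplecticMat M) (hα : 0 ≤ α + 1)
    (E : Matrix (Fin (2 * n)) (Fin (2 * n)) ℝ) :
    c * |barrierForm M α ζ E| ≤
      matNorm E * (32 * (α + 1) + 8 * n + 16) * ((M⁻¹ *ᵥ ζ.1 ⬝ᵥ ζ.1) * phiM M ζ) := by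
  have hu := le_dotProduct_mulVec_inv hc hdet ζ.1
  have hv := (le_dotProduct_mulVec_of_matLE hc (Jmat n *ᵥ ζ.1)).trans_eq
    (hS.Jmat_mulVec_dotProduct_mulVec ζ.1)
  have huE := mul_abs_dotProduct_mulVec_self_le hc₀.le E hu
  have hvE := mul_abs_dotProduct_mulVec_self_le hc₀.le E hv
  have hwE := mul_abs_dotProduct_mulVec_self_le hc₀.le E
    (mul_dotProduct_gradH_phiM_le hc₀.le hc hM hdet hS (ζ := ζ))
  have htr := mul_abs_trace_mul_inv_le hc₀ hc hdet E
  push_cast at htr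
  have hφ : 0 ≤ phiM M ζ := by unfold phiM; positivity
  set u := M⁻¹ *ᵥ ζ.1
  set v := Jmat n *ᵥ ζ.1
  set w := gradH (phiM M) ζ
  set q := u ⬝ᵥ ζ.1
  set φ := phiM M ζ
  set e := matNorm E
  have hq : 0 ≤ q := (mul_nonneg hc₀.le (dotProduct_self_star_nonneg u)).trans hu
  have habs : |barrierForm M α ζ E| ≤ (α + 1) * |w ⬝ᵥ E *ᵥ w|
      + φ * (8 * |u ⬝ᵥ E *ᵥ u| + 4 * q * |(E * M⁻¹).trace| + 8 * |v ⬝ᵥ E *ᵥ v|) := by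
    refine (abs_sub _ _).trans (add_le_add ?_ ?_)
    · rw [abs_mul, abs_of_nonneg hα]
    · rw [abs_mul, abs_of_nonneg hφ]
      gcongr
      refine (abs_add_three _ _ _).trans_eq ?_
      norm_num [abs_mul, abs_of_nonneg hq, u, v, q]
  calc c * |barrierForm M α ζ E|
      ≤ (α + 1) * (c * |w ⬝ᵥ E *ᵥ w|) + φ * (8 * (c * |u ⬝ᵥ E *ᵥ u|)
          + 4 * q * (c * |(E * M⁻¹).trace|) + 8 * (c * |v ⬝ᵥ E *ᵥ v|)) := by
        nlinarith [mul_le_mul_of_nonneg_left habs hc₀.le]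
    _ ≤ (α + 1) * (e * (32 * (q * φ))) + φ * (8 * (e * q) + 4 * q * (2 * n * e) + 8 * (e * q)) := by
        gcongr
    _ = e * (32 * (α + 1) + 8 * n + 16) * (q * φ) := by ring

theorem neg_trace_mul_D2H_gfun_nonneg {c : ℝ} (hc₀ : 0 < c) (hc : matLE (c • 1) M)
    (hM : M.IsSymm) (hdet : IsUnit M.det) (hS : IsSymplecticMat M) (hα : 0 < α) (hζ : ζ ≠ 0)
    {A : Matrix (Fin (2 * n)) (Fin (2 * n)) ℝ}
    (hA : matNorm (A - M) * (32 * (α + 1) + 8 * n + 16) ≤ c * (16 * α - 8 * n)) :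
    0 ≤ -(A * D2H (gfun M α) ζ).trace := by
  have hφ := phiM_pos hc₀ hc hdet hζ
  rw [neg_trace_mul_D2H_gfun hM hα.ne' hφ.ne']
  refine mul_nonneg (Real.rpow_nonneg hφ.le _) ?_
  have hq : 0 ≤ M⁻¹ *ᵥ ζ.1 ⬝ᵥ ζ.1 :=
    (mul_nonneg hc₀.le (dotProduct_self_star_nonneg _)).trans (le_dotProduct_mulVec_inv hc hdet _)
  have hE := abs_barrierForm_le hc₀ hc hM hdet hS (α := α) (ζ := ζ) (by linarith) (A - M)
  have hAM := mul_le_mul_of_nonneg_right hA (mul_nonneg hq hφ.le)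
  rw [← add_sub_cancel M A, barrierForm_add, barrierForm_self hM hdet hS]
  refine (mul_nonneg_iff_of_pos_left hc₀).1 ?_
  nlinarith [neg_abs_le (barrierForm M α ζ (A - M))]

end Barrier

end Heisenberg

open Heisenberg

theorem stmt8_general (n : ℕ) (lam Lam δ : ℝ) (hlam : 0 < lam) (hδ : 0 < δ)
    (ω : ℝ → ℝ) (hω : IsModulus ω) :
    ∃ ε₀ > 0, SubsolProp n lam Lam δ ω ε₀ := by
  set α : ℝ := (2 * (n : ℝ) + 2 - 2) / 4 + δ
  have hα : α = n / 2 + δ := by ring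
  have hα₀ : 0 < α := by rw [hα]; positivity
  set C : ℝ := 32 * (α + 1) + 8 * n + 16
  have hC : 0 < C := by positivity
  obtain ⟨ε₀, hε₀, hε₁, hωε⟩ := hω.exists_lt (η := lam * (16 * δ) / C) (by positivity)
  refine ⟨ε₀, hε₀, fun Ω _ A hA hAω hAS z₀ hz₀ z hz ζ hζ => ?_⟩
  obtain ⟨hM, hdet, hlow, -⟩ := hA z₀ hz₀
  refine neg_trace_mul_D2H_gfun_nonneg hlam hlow hM (by simp [hdet]) (hAS z₀ hz₀) hα₀ hζ ?_
  calc matNorm (A z - A z₀) * C ≤ lam * (16 * δ) / C * C := by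
        gcongr
        exact (hAω.2 z₀ hz₀ ε₀ hε₀ hε₁ z hz).trans hωε.le
    _ = lam * (16 * α - 8 * n) := by rw [div_mul_cancel₀ _ hC.ne', hα]; ring

/-- Lemma 3.6. Fix `0 < δ < 1/2`, `0 < λ ≤ 1 ≤ Λ` and a modulus `ω`.
There exists `ε₀ > 0`, depending only on `λ, Λ, Q, δ, ω`, such that for every open `Ω`,
every symplectic `A ∈ M_n(λ,Λ,Ω) ∩ C(Ω,ω)` and every `z₀ ∈ Ω`, the barrier
`g = -(1/α)·φ_{A(z₀)}^{-α}` with `α = (Q-2)/4 + δ` satisfies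
`-tr(A(z)·(D²_H g)(ζ)) ≥ 0` for all `z ∈ B_{ε₀}(z₀) ∩ Ω` and all `ζ ≠ 0`. -/
theorem stmt8 (n : ℕ) (hn : 1 ≤ n) (lam Lam δ : ℝ)
    (hlam : 0 < lam) (hlam1 : lam ≤ 1) (hLam1 : 1 ≤ Lam)
    (hδ : 0 < δ) (hδ' : δ < 1 / 2)
    (ω : ℝ → ℝ) (hω : IsModulus ω) :
    ∃ ε₀ > 0, SubsolProp n lam Lam δ ω ε₀ :=
  stmt8_general n lam Lam δ hlam hδ ω hω
end
end

section
/- Fix 0 < δ < 1/2, 0 < Λ, Q = 2n+2, and set α := (Q−2)/4 + δ. There exists a constant γ > 0 depending only on Q, Λ, δ such that: for every 2n×2n symmetric positive definite matrix M with M⁻¹ ≤ (1/λ)I and M ≤ Λ I (λ ≤ 1 ≤ Λ), every bounded open set O ⊂ ℝ^{2n+1}, and every z ∈ ℝ^{2n+1}, the function h(z) := ∫_O g(z⁻¹∘ζ) dζ with g(ζ) = −(1/α)φ_M(ζ)^{−α} satisfies 0 ≥ h(z) ≥ −γ·|O|^{1 − 4α/Q}, where |O| is the Lebesgue measure of O.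 -/
/-! Since `⟨M⁻¹x, x⟩ ≥ |x|² / Λ`, the kernel is dominated by `α⁻¹ Λ^{2α} ψ^{-α}` with
`ψ(x, t) = |x|⁴ + t²`. Left translations preserve Lebesgue measure, and the sublevel sets
`{ψ ≤ u}` lie in boxes of volume `2^{Q-1} u^{Q/4}`. For any `ψ` whose sublevel sets have measure
`≤ c u^q` and any `α < q`, one gets `∫_S ψ^{-α} ≤ C |S|^{1-α/q}`: split `S` at the level `s` with
`s^q = |S|`; where `ψ > s` the integrand is at most `s^{-α}`, and `{ψ ≤ s}` is covered by the dyadic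
shells `{s 2^{-k-1} < ψ ≤ s 2^{-k}}`, whose contributions form a geometric series of ratio
`2^{-(q-α)}`. -/

open MeasureTheory Set Matrix

noncomputable section

open Filter Topology

/-- `2⁻¹ ^ (q - α)` is the ratio of the geometric series over the dyadic shells
`{t / 2 < ψ ≤ t}`. -/
def sublevelConst (c q α : ℝ) : ℝ := 1 + c * 2 ^ α / (1 - 2⁻¹ ^ (q - α))

lemma one_le_sublevelConst {c q α : ℝ} (hc : 0 ≤ c) (hαq : α < q) : 1 ≤ sublevelConst c q α := by
  have : (2⁻¹ : ℝ) ^ (q - α) < 1 := Real.rpow_lt_one (by norm_num) (by norm_num) (by linarith)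
  have : 0 ≤ c * 2 ^ α / (1 - 2⁻¹ ^ (q - α)) := div_nonneg (by positivity) (by linarith)
  unfold sublevelConst
  linarith

lemma sublevel_subset_iUnion_shells {X : Type*} {ψ : X → ℝ} {s : ℝ} (hs : 0 < s) :
    {x | ψ x ≤ s} ⊆
      (⋃ k : ℕ, {x | ψ x ∈ Ioc (s * 2⁻¹ ^ k / 2) (s * 2⁻¹ ^ k)}) ∪ {x | ψ x ≤ 0} := by
  intro x (hx : ψ x ≤ s)
  rcases le_or_gt (ψ x) 0 with h0 | h0
  · exact Or.inr h0
  obtain ⟨k, hk, hk'⟩ := exists_nat_pow_near_of_lt_one (div_pos h0 hs)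
    ((div_le_one hs).2 hx) (by norm_num : (0 : ℝ) < 2⁻¹) (by norm_num)
  refine Or.inl (mem_iUnion.2 ⟨k, ?_, ?_⟩)
  · rw [lt_div_iff₀ hs, pow_succ] at hk
    linarith
  · rwa [div_le_iff₀ hs, mul_comm] at hk'

section Sublevel

variable {X : Type*} [MeasurableSpace X] {μ : Measure X} {ψ : X → ℝ} {c q α : ℝ}

lemma measure_setOf_nonpos_eq_zero (hq : 0 < q)
    (hvol : ∀ u > 0, μ {x | ψ x ≤ u} ≤ ENNReal.ofReal (c * u ^ q)) :
    μ {x | ψ x ≤ 0} = 0 := by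
  have hlim : Tendsto (fun u : ℝ => ENNReal.ofReal (c * u ^ q)) (𝓝[>] 0) (𝓝 0) := by
    have : ContinuousAt (fun u : ℝ => ENNReal.ofReal (c * u ^ q)) 0 :=
      ENNReal.continuous_ofReal.continuousAt.comp
        (continuousAt_const.mul (Real.continuousAt_rpow_const _ _ (Or.inr hq.le)))
    simpa [Real.zero_rpow hq.ne'] using this.tendsto.mono_left nhdsWithin_le_nhds
  refine le_antisymm (ge_of_tendsto hlim ?_) bot_le
  filter_upwards [self_mem_nhdsWithin] with u hu
  exact (measure_mono fun x (hx : ψ x ≤ 0) => hx.trans (le_of_lt hu)).trans (hvol u hu)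

lemma setLIntegral_shell_rpow_neg_le (hα : 0 < α) {t : ℝ} (ht : 0 < t)
    (hvol : μ {x | ψ x ≤ t} ≤ ENNReal.ofReal (c * t ^ q)) :
    ∫⁻ x in {x | ψ x ∈ Ioc (t / 2) t}, ENNReal.ofReal (ψ x ^ (-α)) ∂μ ≤
      ENNReal.ofReal (c * 2 ^ α * t ^ (q - α)) := by
  calc ∫⁻ x in {x | ψ x ∈ Ioc (t / 2) t}, ENNReal.ofReal (ψ x ^ (-α)) ∂μ
      ≤ ∫⁻ _ in {x | ψ x ∈ Ioc (t / 2) t}, ENNReal.ofReal ((t / 2) ^ (-α)) ∂μ :=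
        setLIntegral_mono measurable_const fun x hx => ENNReal.ofReal_le_ofReal <|
          Real.rpow_le_rpow_of_nonpos (by positivity) hx.1.le (by linarith)
    _ ≤ ENNReal.ofReal ((t / 2) ^ (-α)) * ENNReal.ofReal (c * t ^ q) := by
        rw [setLIntegral_const]
        exact mul_le_mul_right ((measure_mono fun x hx => hx.2).trans hvol) _
    _ = ENNReal.ofReal (c * 2 ^ α * t ^ (q - α)) := by
        rw [← ENNReal.ofReal_mul (by positivity), Real.div_rpow ht.le zero_le_two,
          Real.rpow_sub ht, Real.rpow_neg ht.le, Real.rpow_neg zero_le_two]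
        congr 1
        field_simp

lemma setLIntegral_sublevel_rpow_neg_le (hc : 0 ≤ c) (hα : 0 < α) (hαq : α < q)
    (hvol : ∀ u > 0, μ {x | ψ x ≤ u} ≤ ENNReal.ofReal (c * u ^ q)) {s : ℝ} (hs : 0 < s) :
    ∫⁻ x in {x | ψ x ≤ s}, ENNReal.ofReal (ψ x ^ (-α)) ∂μ ≤
      ENNReal.ofReal (c * 2 ^ α / (1 - 2⁻¹ ^ (q - α)) * s ^ (q - α)) := by
  set r : ℝ := 2⁻¹ ^ (q - α)
  have hr0 : 0 ≤ r := by positivity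
  have hr1 : r < 1 := Real.rpow_lt_one (by norm_num) (by norm_num) (by linarith)
  have hshell (k : ℕ) : (s * 2⁻¹ ^ k) ^ (q - α) = s ^ (q - α) * r ^ k := by
    rw [Real.mul_rpow hs.le (by positivity), Real.rpow_pow_comm (by norm_num)]
  calc ∫⁻ x in {x | ψ x ≤ s}, ENNReal.ofReal (ψ x ^ (-α)) ∂μ
      ≤ (∑' k : ℕ, ∫⁻ x in {x | ψ x ∈ Ioc (s * 2⁻¹ ^ k / 2) (s * 2⁻¹ ^ k)},
            ENNReal.ofReal (ψ x ^ (-α)) ∂μ) +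
          ∫⁻ x in {x | ψ x ≤ 0}, ENNReal.ofReal (ψ x ^ (-α)) ∂μ :=
        (lintegral_mono_set (sublevel_subset_iUnion_shells hs)).trans <|
          (lintegral_union_le _ _ _).trans (add_le_add_left (lintegral_iUnion_le _ _) _)
    _ ≤ ∑' k : ℕ, ENNReal.ofReal (c * 2 ^ α * s ^ (q - α) * r ^ k) := by
        rw [setLIntegral_measure_zero _ _ (measure_setOf_nonpos_eq_zero (hα.trans hαq) hvol), add_zero]
        refine ENNReal.tsum_le_tsum fun k => ?_
        rw [mul_assoc, ← hshell]
        exact setLIntegral_shell_rpow_neg_le hα (by positivity) (hvol _ (by positivity))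
    _ = ENNReal.ofReal (c * 2 ^ α / (1 - r) * s ^ (q - α)) := by
        rw [← ENNReal.ofReal_tsum_of_nonneg (fun k => by positivity)
          ((summable_geometric_of_lt_one hr0 hr1).mul_left _), tsum_mul_left,
          tsum_geometric_of_lt_one hr0 hr1]
        ring_nf

theorem setLIntegral_rpow_neg_le (hc : 0 ≤ c) (hα : 0 < α) (hαq : α < q)
    (hvol : ∀ u > 0, μ {x | ψ x ≤ u} ≤ ENNReal.ofReal (c * u ^ q)) {S : Set X} (hS : μ S ≠ ⊤) :
    ∫⁻ x in S, ENNReal.ofReal (ψ x ^ (-α)) ∂μ ≤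
      ENNReal.ofReal (sublevelConst c q α * (μ S).toReal ^ (1 - α / q)) := by
  rcases eq_or_ne (μ S) 0 with h0 | h0
  · rw [setLIntegral_measure_zero _ _ h0]
    exact zero_le
  have hq : 0 < q := hα.trans hαq
  set v := (μ S).toReal
  have hv : 0 < v := ENNReal.toReal_pos h0 hS
  -- `s ^ q = μ S` balances the two halves of `S` split at the level `s`
  set s := v ^ q⁻¹
  have hs : 0 < s := by positivity
  have hfar : s ^ (-α) * v = v ^ (1 - α / q) := by
    rw [← Real.rpow_mul hv.le, ← Real.rpow_add_one hv.ne']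
    congr 1
    field_simp
    ring
  have hnear : s ^ (q - α) = v ^ (1 - α / q) := by
    rw [← Real.rpow_mul hv.le]
    congr 1
    field_simp
  have hK : 0 ≤ c * 2 ^ α / (1 - 2⁻¹ ^ (q - α)) := by
    have := one_le_sublevelConst hc hαq
    unfold sublevelConst at this
    linarith
  calc ∫⁻ x in S, ENNReal.ofReal (ψ x ^ (-α)) ∂μ
      ≤ ∫⁻ x in S ∩ {x | s < ψ x}, ENNReal.ofReal (ψ x ^ (-α)) ∂μ +
          ∫⁻ x in {x | ψ x ≤ s}, ENNReal.ofReal (ψ x ^ (-α)) ∂μ :=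
        (lintegral_mono_set fun x hx => (le_or_gt (ψ x) s).elim Or.inr
          fun h => Or.inl ⟨hx, h⟩).trans (lintegral_union_le _ _ _)
    _ ≤ ENNReal.ofReal (s ^ (-α)) * μ S +
          ENNReal.ofReal (c * 2 ^ α / (1 - 2⁻¹ ^ (q - α)) * s ^ (q - α)) := by
        refine add_le_add ?_ (setLIntegral_sublevel_rpow_neg_le hc hα hαq hvol hs)
        calc ∫⁻ x in S ∩ {x | s < ψ x}, ENNReal.ofReal (ψ x ^ (-α)) ∂μ
            ≤ ∫⁻ _ in S ∩ {x | s < ψ x}, ENNReal.ofReal (s ^ (-α)) ∂μ :=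
              setLIntegral_mono measurable_const fun x hx => ENNReal.ofReal_le_ofReal <|
                Real.rpow_le_rpow_of_nonpos hs hx.2.le (by linarith)
          _ ≤ ENNReal.ofReal (s ^ (-α)) * μ S := by
              rw [setLIntegral_const]
              exact mul_le_mul_right (measure_mono inter_subset_left) _
    _ = ENNReal.ofReal (sublevelConst c q α * v ^ (1 - α / q)) := by
        rw [← ENNReal.ofReal_toReal hS, ← ENNReal.ofReal_mul (by positivity), hfar, hnear,
          ← ENNReal.ofReal_add (by positivity) (by positivity), sublevelConst]
        congr 1
        ring

end Sublevel

lemma neg_le_integral_of_lintegral_norm_le {X : Type*} [MeasurableSpace X] {μ : Measure X}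
    {f : X → ℝ} {B : ℝ} (hB : 0 ≤ B) (h : ∫⁻ x, ENNReal.ofReal ‖f x‖ ∂μ ≤ ENNReal.ofReal B) :
    -B ≤ ∫ x, f x ∂μ :=
  neg_le_of_abs_le <|
    (norm_integral_le_lintegral_norm f).trans (ENNReal.toReal_le_of_le_ofReal hB h)

lemma sum_sq_le_mul_inv_quad {ι : Type*} [Fintype ι] [DecidableEq ι] {M : Matrix ι ι ℝ}
    {Lam : ℝ} (hM : M.PosDef) (hMle : (Lam • (1 : Matrix ι ι ℝ) - M).PosSemidef)
    (hLam : 0 < Lam) (x : ι → ℝ) : ∑ i, x i ^ 2 ≤ Lam * (M⁻¹ *ᵥ x ⬝ᵥ x) := by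
  set y := M⁻¹ *ᵥ x
  have hMy : M *ᵥ y = x := by
    rw [mulVec_mulVec, mul_nonsing_inv _ hM.det_pos.ne'.isUnit, one_mulVec]
  have hyx : y ⬝ᵥ M *ᵥ x = x ⬝ᵥ x := by
    rw [dotProduct_mulVec, ← mulVec_transpose, ← conjTranspose_eq_transpose_of_trivial,
      hM.isHermitian.eq, hMy]
  -- `M ≥ 0` at `x - Λ y` and `Λ - M ≥ 0` at `x` add up to `Λ (Λ ⟨y, x⟩ - |x|²) ≥ 0`
  have h₁ := hM.posSemidef.dotProduct_mulVec_nonneg (x - Lam • y)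
  have h₂ := hMle.dotProduct_mulVec_nonneg x
  simp only [star_trivial, mulVec_sub, mulVec_smul, hMy, sub_dotProduct, dotProduct_sub,
    smul_dotProduct, dotProduct_smul, sub_mulVec, smul_mulVec, one_mulVec, hyx,
    smul_eq_mul] at h₁ h₂
  rw [show ∑ i, x i ^ 2 = x ⬝ᵥ x by simp [dotProduct, sq]]
  nlinarith

def rho4 {ι : Type*} [Fintype ι] (w : (ι → ℝ) × ℝ) : ℝ := (∑ i, w.1 i ^ 2) ^ 2 + w.2 ^ 2

section Rho4

variable {ι : Type*} [Fintype ι]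

lemma continuous_rho4 : Continuous (rho4 (ι := ι)) := by
  unfold rho4
  fun_prop

lemma rho4_nonneg (w : (ι → ℝ) × ℝ) : 0 ≤ rho4 w := by
  unfold rho4
  positivity

lemma rho4_eq_zero_iff {w : (ι → ℝ) × ℝ} : rho4 w = 0 ↔ w = 0 := by
  simp [rho4, add_eq_zero_iff_of_nonneg, Finset.sum_eq_zero_iff_of_nonneg, Prod.ext_iff,
    funext_iff, sq_nonneg]

lemma rho4_sublevel_subset_box {a : ℝ} (ha : 0 ≤ a) :
    {w : (ι → ℝ) × ℝ | rho4 w ≤ a ^ 4} ⊆ (univ.pi fun _ => Icc (-a) a) ×ˢ Icc (-a ^ 2) (a ^ 2) := by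
  rintro ⟨x, t⟩ hw
  replace hw : (∑ i, x i ^ 2) ^ 2 + t ^ 2 ≤ a ^ 4 := hw
  have hsum : ∑ i, x i ^ 2 ≤ a ^ 2 :=
    (abs_le_of_sq_le_sq' (by nlinarith [sq_nonneg t]) (by positivity)).2
  refine ⟨fun i _ => abs_le_of_sq_le_sq' ?_ ha, abs_le_of_sq_le_sq' (by nlinarith) (by positivity)⟩
  exact (Finset.single_le_sum (fun j _ => sq_nonneg (x j)) (Finset.mem_univ i)).trans hsum

lemma volume_rho4_le_pow_four_le {a : ℝ} (ha : 0 ≤ a) :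
    volume {w : (ι → ℝ) × ℝ | rho4 w ≤ a ^ 4} ≤
      ENNReal.ofReal (2 ^ (Fintype.card ι + 1) * a ^ (Fintype.card ι + 2)) := by
  refine (measure_mono (rho4_sublevel_subset_box ha)).trans_eq ?_
  rw [Measure.volume_eq_prod, Measure.prod_prod, volume_pi_pi, Real.volume_Icc, Real.volume_Icc,
    Finset.prod_const, Finset.card_univ, ← ENNReal.ofReal_pow (by linarith),
    ← ENNReal.ofReal_mul (pow_nonneg (by linarith) _)]
  congr 1
  ring

lemma volume_rho4_le {u : ℝ} (hu : 0 < u) :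
    volume {w : (ι → ℝ) × ℝ | rho4 w ≤ u} ≤
      ENNReal.ofReal (2 ^ (Fintype.card ι + 1) * u ^ ((Fintype.card ι + 2 : ℝ) / 4)) := by
  have ha : (u ^ (4 : ℝ)⁻¹) ^ 4 = u := by
    simpa using Real.rpow_inv_natCast_pow hu.le (n := 4) (by norm_num)
  have := volume_rho4_le_pow_four_le (ι := ι) (a := u ^ (4 : ℝ)⁻¹) (by positivity)
  rw [ha, ← Real.rpow_natCast (u ^ _), ← Real.rpow_mul hu.le, inv_mul_eq_div] at this
  exact_mod_cast this

end Rho4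

lemma measurePreserving_hmul (n : ℕ) (w : Hpt n) :
    MeasurePreserving (hmul w) volume volume := by
  have hshear : Measurable (Function.uncurry fun (ξ : Fin (2 * n) → ℝ) (τ : ℝ) =>
      w.2 + τ + 2 * ((Jmat n) *ᵥ w.1 ⬝ᵥ ξ)) := by
    simp only [dotProduct]
    fun_prop
  rw [Measure.volume_eq_prod]
  refine (measurePreserving_add_left volume w.1).skew_product hshear
    (Eventually.of_forall fun ξ => ?_)
  have hshift : (fun τ => w.2 + τ + 2 * ((Jmat n) *ᵥ w.1 ⬝ᵥ ξ)) =
      (· + (w.2 + 2 * ((Jmat n) *ᵥ w.1 ⬝ᵥ ξ))) := by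
    funext τ
    ring
  rw [hshift]
  exact (measurePreserving_add_right _ _).map_eq

lemma volume_rho4_comp_hmul_le {n : ℕ} (z : Hpt n) {u : ℝ} (hu : 0 < u) :
    volume {ζ : Hpt n | rho4 (hmul z ζ) ≤ u} ≤
      ENNReal.ofReal (2 ^ (2 * n + 1) * u ^ ((2 * n + 2 : ℝ) / 4)) := by
  change volume (hmul z ⁻¹' {w | rho4 w ≤ u}) ≤ _
  rw [(measurePreserving_hmul n z).measure_preimage
    (measurableSet_le continuous_rho4.measurable measurable_const).nullMeasurableSet]
  simpa using volume_rho4_le (ι := Fin (2 * n)) hu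

section Barrier

variable {n : ℕ} {M : Matrix (Fin (2 * n)) (Fin (2 * n)) ℝ} {Lam α : ℝ}

lemma phiM_nonneg (w : Hpt n) : 0 ≤ phiM M w := by
  unfold phiM
  positivity

lemma gfun_nonpos (hα : 0 ≤ α) (w : Hpt n) : gfun M α w ≤ 0 :=
  mul_nonpos_of_nonpos_of_nonneg (by simpa using hα) (Real.rpow_nonneg (phiM_nonneg w) _)

lemma rho4_le_sq_mul_phiM (hLam : 1 ≤ Lam) (hM : M.PosDef)
    (hMle : matLE M (Lam • (1 : Matrix (Fin (2 * n)) (Fin (2 * n)) ℝ))) (w : Hpt n) :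
    rho4 w ≤ Lam ^ 2 * phiM M w := by
  have hx := sum_sq_le_mul_inv_quad hM hMle (by linarith) w.1
  have hx0 : 0 ≤ ∑ i, w.1 i ^ 2 := by positivity
  have ht : w.2 ^ 2 ≤ Lam ^ 2 * w.2 ^ 2 :=
    le_mul_of_one_le_left (sq_nonneg _) (one_le_pow₀ hLam)
  unfold rho4 phiM
  nlinarith [pow_le_pow_left₀ hx0 hx 2]

lemma phiM_rpow_neg_le (hLam : 1 ≤ Lam) (hM : M.PosDef)
    (hMle : matLE M (Lam • (1 : Matrix (Fin (2 * n)) (Fin (2 * n)) ℝ))) (hα : 0 < α)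
    (w : Hpt n) : phiM M w ^ (-α) ≤ Lam ^ (2 * α) * rho4 w ^ (-α) := by
  rcases (rho4_nonneg w).eq_or_lt with h0 | hpos
  · obtain rfl := rho4_eq_zero_iff.1 h0.symm
    simp [phiM, rho4, Real.zero_rpow (neg_ne_zero.2 hα.ne')]
  calc phiM M w ^ (-α) ≤ (rho4 w / Lam ^ 2) ^ (-α) :=
        Real.rpow_le_rpow_of_nonpos (by positivity)
          ((div_le_iff₀' (by positivity)).2 (rho4_le_sq_mul_phiM hLam hM hMle w)) (by linarith)
    _ = Lam ^ (2 * α) * rho4 w ^ (-α) := by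
        rw [Real.div_rpow hpos.le (by positivity), Real.rpow_neg (by positivity : (0 : ℝ) ≤ Lam ^ 2),
          div_inv_eq_mul, ← Real.rpow_natCast_mul (by linarith), mul_comm]
        norm_num

lemma norm_gfun_le (hLam : 1 ≤ Lam) (hM : M.PosDef)
    (hMle : matLE M (Lam • (1 : Matrix (Fin (2 * n)) (Fin (2 * n)) ℝ))) (hα : 0 < α)
    (w : Hpt n) : ‖gfun M α w‖ ≤ α⁻¹ * Lam ^ (2 * α) * rho4 w ^ (-α) := by
  rw [gfun, norm_mul, norm_neg, Real.norm_of_nonneg (by positivity),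
    Real.norm_of_nonneg (Real.rpow_nonneg (phiM_nonneg w) _), one_div, mul_assoc]
  exact mul_le_mul_of_nonneg_left (phiM_rpow_neg_le hLam hM hMle hα w) (by positivity)

lemma lintegral_norm_gfun_comp_hmul_le (hLam : 1 ≤ Lam) (hM : M.PosDef)
    (hMle : matLE M (Lam • (1 : Matrix (Fin (2 * n)) (Fin (2 * n)) ℝ))) (hα : 0 < α)
    (hαq : α < (2 * n + 2) / 4) (z : Hpt n) {O : Set (Hpt n)} (hO : volume O ≠ ⊤) :
    ∫⁻ ζ in O, ENNReal.ofReal ‖gfun M α (hmul z ζ)‖ ≤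
      ENNReal.ofReal (α⁻¹ * Lam ^ (2 * α) * (sublevelConst (2 ^ (2 * n + 1)) ((2 * n + 2) / 4) α *
        (volume O).toReal ^ (1 - α / ((2 * n + 2) / 4)))) := by
  calc ∫⁻ ζ in O, ENNReal.ofReal ‖gfun M α (hmul z ζ)‖
      ≤ ∫⁻ ζ in O, ENNReal.ofReal (α⁻¹ * Lam ^ (2 * α)) *
          ENNReal.ofReal (rho4 (hmul z ζ) ^ (-α)) :=
        lintegral_mono fun ζ => by
          rw [← ENNReal.ofReal_mul (by positivity)]
          exact ENNReal.ofReal_le_ofReal (norm_gfun_le hLam hM hMle hα _)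
    _ = ENNReal.ofReal (α⁻¹ * Lam ^ (2 * α)) *
          ∫⁻ ζ in O, ENNReal.ofReal (rho4 (hmul z ζ) ^ (-α)) :=
        lintegral_const_mul' _ _ ENNReal.ofReal_ne_top
    _ ≤ _ := by
        rw [ENNReal.ofReal_mul (p := α⁻¹ * Lam ^ (2 * α)) (by positivity)]
        gcongr
        exact setLIntegral_rpow_neg_le (ψ := fun ζ => rho4 (hmul z ζ)) (by positivity) hα hαq
          (fun u hu => volume_rho4_comp_hmul_le z hu) hO

end Barrier

theorem stmt12_general (n : ℕ) (Lam δ : ℝ) (hLam : 1 ≤ Lam)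
    (hδ : 0 < δ) (hδ' : δ < 1 / 2)
    (Q α : ℝ) (hQ : Q = 2 * n + 2) (hα : α = (Q - 2) / 4 + δ) :
    ∃ γ > 0, ∀ lam : ℝ, 0 < lam → lam ≤ 1 →
      ∀ M : Matrix (Fin (2 * n)) (Fin (2 * n)) ℝ, M.IsSymm → M.PosDef →
        matLE M⁻¹ (lam⁻¹ • (1 : Matrix (Fin (2 * n)) (Fin (2 * n)) ℝ)) →
        matLE M (Lam • (1 : Matrix (Fin (2 * n)) (Fin (2 * n)) ℝ)) →
      ∀ O : Set (Hpt n), IsOpen O → Bornology.IsBounded O →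
      ∀ z : Hpt n,
        (∫ ζ in O, gfun M α (hmul (hinv z) ζ) ∂volume) ≤ 0 ∧
        -(γ * (volume O).toReal ^ (1 - 4 * α / Q)) ≤
          ∫ ζ in O, gfun M α (hmul (hinv z) ζ) ∂volume := by
  subst hQ
  have hα0 : 0 < α := by
    rw [hα]
    linarith [(n.cast_nonneg : (0 : ℝ) ≤ n)]
  have hαq : α < (2 * n + 2) / 4 := by
    rw [hα]
    linarith
  have hexp : 1 - α / ((2 * n + 2) / 4) = 1 - 4 * α / (2 * n + 2) := by
    rw [div_div_eq_mul_div, mul_comm α]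
  have hC := one_le_sublevelConst (c := 2 ^ (2 * n + 1)) (by positivity) hαq
  refine ⟨α⁻¹ * Lam ^ (2 * α) * sublevelConst (2 ^ (2 * n + 1)) ((2 * n + 2) / 4) α,
    mul_pos (by positivity) (one_pos.trans_le hC), ?_⟩
  intro lam _ _ M _ hM _ hMle O _ hO z
  refine ⟨integral_nonpos fun ζ => gfun_nonpos hα0.le _,
    neg_le_integral_of_lintegral_norm_le (by positivity) ?_⟩
  rw [mul_assoc, ← hexp]
  exact lintegral_norm_gfun_comp_hmul_le hLam hM hMle hα0 hαq (hinv z) hO.measure_lt_top.ne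

/-- Remark 3.8, estimate (3.9). With `Q = 2n+2` and `α = (Q-2)/4 + δ`,
there is `γ > 0` depending only on `Q, Λ, δ` such that for every symmetric positive
definite `M` with `M⁻¹ ≤ (1/λ)I` and `M ≤ ΛI` (`0 < λ ≤ 1 ≤ Λ`), every bounded open set
`O` and every `z`, the barrier `h(z) = ∫_O g(z⁻¹∘ζ) dζ`, `g = -(1/α)φ_M^{-α}`, satisfies
`0 ≥ h(z) ≥ -γ·|O|^{1-4α/Q}`. -/
theorem stmt12 (n : ℕ) (hn : 1 ≤ n) (Lam δ : ℝ) (hLam : 1 ≤ Lam)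
    (hδ : 0 < δ) (hδ' : δ < 1 / 2)
    (Q α : ℝ) (hQ : Q = 2 * n + 2) (hα : α = (Q - 2) / 4 + δ) :
    ∃ γ > 0, ∀ lam : ℝ, 0 < lam → lam ≤ 1 →
      ∀ M : Matrix (Fin (2 * n)) (Fin (2 * n)) ℝ, M.IsSymm → M.PosDef →
        matLE M⁻¹ (lam⁻¹ • (1 : Matrix (Fin (2 * n)) (Fin (2 * n)) ℝ)) →
        matLE M (Lam • (1 : Matrix (Fin (2 * n)) (Fin (2 * n)) ℝ)) →
      ∀ O : Set (Hpt n), IsOpen O → Bornology.IsBounded O →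
      ∀ z : Hpt n,
        (∫ ζ in O, gfun M α (hmul (hinv z) ζ) ∂volume) ≤ 0 ∧
        -(γ * (volume O).toReal ^ (1 - 4 * α / Q)) ≤
          ∫ ζ in O, gfun M α (hmul (hinv z) ζ) ∂volume :=
  stmt12_general n Lam δ hLam hδ hδ' Q α hQ hα
end
end
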